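/- Suppose additionally that N < kmax and that u satisfies (U1) and (U2). If a strategy profile s = (s_1, s_2) is Pareto optimal over the subgame T1, then s has cut-off form on T1 with cut-off at most N: there exists an integer m with kmin ≤ m ≤ N such that for every arrival pair (t1, t2) ∈ T1 and every i ∈ {1,2}, s_i(t_i) = c if and only if t_i < m. -/

import Mathlib

/-- The two actions: `c` (canteen) and `o` (office). -/
inductive Act : Type
  | c : Act
  | o : Act
deriving DecidableEq

open Act

/-- The set of arrival pairs
`T = {(k, k+1) : kmin ≤ k ≤ kmax - 1} ∪ {(k, k-1) : kmin + 1 ≤ k ≤ kmax}`. -/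
noncomputable def T (kmin kmax : ℤ) : Finset (ℤ × ℤ) :=
  ((Finset.Icc kmin (kmax - 1)).image (fun k => (k, k + 1))) ∪
  ((Finset.Icc (kmin + 1) kmax).image (fun k => (k, k - 1)))

/-- Subgame `T1 = {(t1,t2) ∈ T : t1 ≡ kmin (mod 2)}`. -/
noncomputable def T1 (kmin kmax : ℤ) : Finset (ℤ × ℤ) :=
  (T kmin kmax).filter (fun t => t.1 % 2 = kmin % 2)

/-- Subgame `T2 = {(t1,t2) ∈ T : t2 ≡ kmin (mod 2)}`. -/
noncomputable def T2 (kmin kmax : ℤ) : Finset (ℤ × ℤ) :=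
  (T kmin kmax).filter (fun t => t.2 % 2 = kmin % 2)

/-- The expected utility of profile `s` over a set `S` of arrival pairs:
`EU_S(s) = (1/|S|) · Σ_{(t1,t2) ∈ S} u_{(t1,t2)}(s_1(t1), s_2(t2))`. -/
noncomputable def EU (u : ℤ × ℤ → Act → Act → ℝ) (s : (ℤ → Act) × (ℤ → Act))
    (S : Finset (ℤ × ℤ)) : ℝ :=
  (∑ t ∈ S, u t (s.1 t.1) (s.2 t.2)) / S.card

/-- `s` is Pareto optimal over `S` if no profile `s'` has `EU_S(s') > EU_S(s)`. -/
def ParetoOptimal (u : ℤ × ℤ → Act → Act → ℝ) (S : Finset (ℤ × ℤ))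
    (s : (ℤ → Act) × (ℤ → Act)) : Prop :=
  ¬ ∃ s' : (ℤ → Act) × (ℤ → Act), EU u s' S > EU u s S

/-- `u` satisfies conditions (U1) and (U2) on the arrival pairs of `T`. -/
def SatisfiesU1U2 (kmin kmax N : ℤ) (u : ℤ × ℤ → Act → Act → ℝ) : Prop :=
  ∀ t ∈ T kmin kmax,
    (t.1 < N ∧ t.2 < N →
      u t c c > u t o o ∧ u t o o > u t c o ∧ u t c o = u t o c) ∧
    (N ≤ t.1 ∨ N ≤ t.2 →
      u t o o > u t c o ∧ u t c o = u t o c ∧ u t o c = u t c c)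

/-- `u` is uniform with values `A > B > C` (the order is assumed separately). -/
def Uniform (kmin kmax N : ℤ) (u : ℤ × ℤ → Act → Act → ℝ) (A B C : ℝ) : Prop :=
  ∀ t ∈ T kmin kmax,
    (t.1 < N ∧ t.2 < N →
      u t c c = A ∧ u t o o = B ∧ u t c o = C ∧ u t o c = C) ∧
    (N ≤ t.1 ∨ N ≤ t.2 →
      u t o o = B ∧ u t c c = C ∧ u t c o = C ∧ u t o c = C)

/-- The cut-off strategy with cut-off `m`: canteen iff arriving strictly before `m`. -/
def cutoff (m : ℤ) : ℤ → Act := fun k => if k < m then c else o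

/-- The all-office strategy. -/
def allOffice : ℤ → Act := fun _ => o

/-!
Restricted to `T1`, every arrival time in `[kmin, kmax]` belongs to exactly one player (player 1
owns the times of the parity of `kmin`, player 2 the others), and the arrival pairs of `T1` are the
edges `{j, j + 1}` of the path on these times. A profile is therefore a single labelling `v` of the
path by actions, and its total payoff is a sum of one 2×2 game per edge: a coordination game in
which `(c, c)` is best while both times are before `N`, and a game in which `o` is weakly dominant
and `(o, o)` strictly best once either time is `≥ N`. For an optimal labelling, switching every
time `≥ N` to `o` cannot strictly gain, so all these times are labelled `o`; and if `v r = c` with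
`r < N`, switching every time `≤ r` to `c` cannot strictly gain, so all these times are labelled
`c`. Hence the canteen times form an initial segment ending before `N`.
-/

open Finset

def CanteenGame (w : Act → Act → ℝ) : Prop :=
  w c c > w o o ∧ w o o > w c o ∧ w c o = w o c

def OfficeGame (w : Act → Act → ℝ) : Prop :=
  w o o > w c o ∧ w c o = w o c ∧ w o c = w c c

namespace CanteenGame

variable {w : Act → Act → ℝ}

theorem swap (hw : CanteenGame w) : CanteenGame (Function.swap w) := by
  obtain ⟨h₁, h₂, h₃⟩ := hw
  refine ⟨?_, ?_, ?_⟩ <;> simp only [Function.swap] <;> linarith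

theorem le_cc (hw : CanteenGame w) (a b : Act) : w a b ≤ w c c := by
  obtain ⟨h₁, h₂, h₃⟩ := hw
  cases a <;> cases b <;> linarith

theorem o_lt_cc (hw : CanteenGame w) (b : Act) : w o b < w c c := by
  obtain ⟨h₁, h₂, h₃⟩ := hw
  cases b <;> linarith

end CanteenGame

namespace OfficeGame

variable {w : Act → Act → ℝ}

theorem swap (hw : OfficeGame w) : OfficeGame (Function.swap w) := by
  obtain ⟨h₁, h₂, h₃⟩ := hw
  refine ⟨?_, ?_, ?_⟩ <;> simp only [Function.swap] <;> linarith

theorem le_left_o (hw : OfficeGame w) (a b : Act) : w a b ≤ w a o := by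
  obtain ⟨h₁, h₂, h₃⟩ := hw
  cases a <;> cases b <;> linarith

theorem le_oo (hw : OfficeGame w) (a b : Act) : w a b ≤ w o o := by
  obtain ⟨h₁, h₂, h₃⟩ := hw
  cases a <;> cases b <;> linarith

theorem c_left_lt_oo (hw : OfficeGame w) (b : Act) : w c b < w o o := by
  obtain ⟨h₁, h₂, h₃⟩ := hw
  cases b <;> linarith

theorem c_right_lt_oo (hw : OfficeGame w) (a : Act) : w a c < w o o :=
  hw.swap.c_left_lt_oo a

end OfficeGame

section Path

variable (W : ℤ → Act → Act → ℝ) (a b : ℤ)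

noncomputable def pathPayoff (v : ℤ → Act) : ℝ :=
  ∑ l ∈ Ico a b, W l (v l) (v (l + 1))

variable {W a b} {N : ℤ} {v : ℤ → Act}

theorem pathPayoff_lt_of_edgewise {v' : ℤ → Act}
    (hle : ∀ l ∈ Ico a b, W l (v l) (v (l + 1)) ≤ W l (v' l) (v' (l + 1)))
    (hlt : ∃ l ∈ Ico a b, W l (v l) (v (l + 1)) < W l (v' l) (v' (l + 1))) :
    pathPayoff W a b v < pathPayoff W a b v' :=
  sum_lt_sum hle hlt

theorem eq_o_of_le_of_optimal (hoff : ∀ l ∈ Ico a b, N ≤ l + 1 → OfficeGame (W l))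
    (hopt : ∀ v', pathPayoff W a b v' ≤ pathPayoff W a b v) (haN : a ≤ N) (hNb : N < b)
    {j : ℤ} (hNj : N ≤ j) (hjb : j ≤ b) : v j = o := by
  by_contra hj
  replace hj : v j = c := by cases h : v j <;> simp_all
  let v' : ℤ → Act := fun k => if N ≤ k then o else v k
  refine (hopt v').not_gt (pathPayoff_lt_of_edgewise (fun l hl => ?_) ?_)
  · have hW := hoff l hl
    by_cases hl₁ : N ≤ l
    · simpa [v', hl₁, show N ≤ l + 1 by omega] using hW (by omega) |>.le_oo _ _
    by_cases hl₂ : N ≤ l + 1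
    · simpa [v', hl₁, hl₂] using (hW hl₂).le_left_o _ _
    · simp [v', hl₁, hl₂]
  · rcases hjb.lt_or_eq with hjb | rfl
    · refine ⟨j, mem_Ico.2 ⟨by omega, hjb⟩, ?_⟩
      simpa [v', hNj, show N ≤ j + 1 by omega, hj] using
        (hoff j (mem_Ico.2 ⟨by omega, hjb⟩) (by omega)).c_left_lt_oo _
    · refine ⟨j - 1, mem_Ico.2 ⟨by omega, by omega⟩, ?_⟩
      simpa [v', show N ≤ j - 1 by omega, hNj, hj] using
        (hoff (j - 1) (mem_Ico.2 ⟨by omega, by omega⟩) (by omega)).c_right_lt_oo _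

theorem eq_c_of_le_of_optimal (hcant : ∀ l ∈ Ico a b, l + 1 < N → CanteenGame (W l))
    (hopt : ∀ v', pathPayoff W a b v' ≤ pathPayoff W a b v) {r : ℤ} (hr : v r = c)
    (hrN : r < N) (hrb : r ≤ b) {i : ℤ} (hai : a ≤ i) (hir : i ≤ r) : v i = c := by
  by_contra hi
  replace hi : v i = o := by cases h : v i <;> simp_all
  let v' : ℤ → Act := fun k => if k ≤ r then c else v k
  refine (hopt v').not_gt (pathPayoff_lt_of_edgewise (fun l hl => ?_) ?_)
  · by_cases hl₁ : l + 1 ≤ r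
    · simpa [v', hl₁, show l ≤ r by omega] using (hcant l hl (by omega)).le_cc _ _
    by_cases hl₂ : l = r
    · simp [v', hl₂, hr]
    · simp [v', hl₁, show ¬ l ≤ r by omega]
  · have hir' : i < r := lt_of_le_of_ne hir (by rintro rfl; simp_all)
    refine ⟨i, mem_Ico.2 ⟨hai, by omega⟩, ?_⟩
    simpa [v', hir, show i + 1 ≤ r by omega, hi] using
      (hcant i (mem_Ico.2 ⟨hai, by omega⟩) (by omega)).o_lt_cc _

theorem exists_cutoff_of_optimal (hcant : ∀ l ∈ Ico a b, l + 1 < N → CanteenGame (W l))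
    (hoff : ∀ l ∈ Ico a b, N ≤ l + 1 → OfficeGame (W l))
    (hopt : ∀ v', pathPayoff W a b v' ≤ pathPayoff W a b v) (haN : a ≤ N) (hNb : N < b) :
    ∃ m, a ≤ m ∧ m ≤ N ∧ ∀ j ∈ Icc a b, (v j = c ↔ j < m) := by
  have hN : N ∈ (Icc a b).filter (v · = o) :=
    mem_filter.2 ⟨mem_Icc.2 ⟨haN, hNb.le⟩, eq_o_of_le_of_optimal hoff hopt haN hNb le_rfl hNb.le⟩
  obtain ⟨m, hm, hmin⟩ := ((Icc a b).filter (v · = o)).exists_min_image id ⟨N, hN⟩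
  obtain ⟨hm, hvm⟩ := mem_filter.1 hm
  obtain ⟨ham, hmb⟩ := mem_Icc.1 hm
  refine ⟨m, ham, hmin N hN, fun j hj => ?_⟩
  obtain ⟨haj, hjb⟩ := mem_Icc.1 hj
  constructor
  · intro hvj
    by_contra hjm
    have hjN : j < N := by
      by_contra hNj
      simp [eq_o_of_le_of_optimal hoff hopt haN hNb (not_lt.1 hNj) hjb] at hvj
    simp [eq_c_of_le_of_optimal hcant hopt hvj hjN hjb ham (not_lt.1 hjm)] at hvm
  · intro hjm
    by_contra hvj
    exact absurd (hmin j (mem_filter.2 ⟨hj, by cases h : v j <;> simp_all⟩)) (by simpa using hjm)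

end Path

theorem mem_T_iff {kmin kmax : ℤ} {t : ℤ × ℤ} :
    t ∈ T kmin kmax ↔ kmin ≤ t.1 ∧ t.1 ≤ kmax ∧ kmin ≤ t.2 ∧ t.2 ≤ kmax ∧
      (t.2 = t.1 + 1 ∨ t.1 = t.2 + 1) := by
  obtain ⟨x, y⟩ := t
  simp only [T, mem_union, mem_image, mem_Icc, Prod.mk.injEq]
  constructor
  · rintro (⟨k, hk, rfl, rfl⟩ | ⟨k, hk, rfl, rfl⟩) <;> omega
  · rintro ⟨h₁, h₂, h₃, h₄, rfl | rfl⟩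
    · exact Or.inl ⟨x, by omega, rfl, rfl⟩
    · exact Or.inr ⟨y + 1, by omega, rfl, by omega⟩

section T1Path

variable (kmin : ℤ)

def edge (j : ℤ) : ℤ × ℤ :=
  if j % 2 = kmin % 2 then (j, j + 1) else (j + 1, j)

/-- The game on the edge `{j, j + 1}`, with the action taken at time `j` as first argument. -/
def edgeGame (u : ℤ × ℤ → Act → Act → ℝ) (j : ℤ) : Act → Act → ℝ :=
  if j % 2 = kmin % 2 then u (j, j + 1) else Function.swap (u (j + 1, j))

def ownerAction (s : (ℤ → Act) × (ℤ → Act)) (j : ℤ) : Act :=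
  if j % 2 = kmin % 2 then s.1 j else s.2 j

variable {kmin}

theorem edge_injective : Function.Injective (edge kmin) := by
  intro x y h
  unfold edge at h
  split_ifs at h <;> simp only [Prod.mk.injEq] at h <;> omega

theorem T1_eq_image_edge (kmax : ℤ) : T1 kmin kmax = (Ico kmin kmax).image (edge kmin) := by
  ext ⟨x, y⟩
  simp only [T1, mem_filter, mem_T_iff, mem_image, mem_Ico, edge]
  constructor
  · rintro ⟨⟨h₁, h₂, h₃, h₄, rfl | rfl⟩, hx⟩
    · exact ⟨x, by omega, by simp [hx]⟩
    · exact ⟨y, by omega, by rw [if_neg (by omega)]⟩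
  · rintro ⟨j, hj, hxy⟩
    split_ifs at hxy with hj' <;> simp only [Prod.mk.injEq] at hxy <;> omega

theorem sum_T1_eq_pathPayoff (kmax : ℤ) (u : ℤ × ℤ → Act → Act → ℝ)
    (s : (ℤ → Act) × (ℤ → Act)) :
    ∑ t ∈ T1 kmin kmax, u t (s.1 t.1) (s.2 t.2) =
      pathPayoff (edgeGame kmin u) kmin kmax (ownerAction kmin s) := by
  rw [T1_eq_image_edge, sum_image edge_injective.injOn]
  refine sum_congr rfl fun j _ => ?_
  unfold edge edgeGame ownerAction
  by_cases hj : j % 2 = kmin % 2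
  · simp [hj, show ¬ (j + 1) % 2 = kmin % 2 by omega]
  · simp [hj, show (j + 1) % 2 = kmin % 2 by omega, Function.swap]

theorem ownerAction_self (v : ℤ → Act) : ownerAction kmin (v, v) = v := by
  ext j
  unfold ownerAction
  split_ifs <;> rfl

theorem pathPayoff_le_of_paretoOptimal {kmax : ℤ} (hk : kmin < kmax)
    {u : ℤ × ℤ → Act → Act → ℝ} {s : (ℤ → Act) × (ℤ → Act)}
    (hpo : ParetoOptimal u (T1 kmin kmax) s) (v : ℤ → Act) :
    pathPayoff (edgeGame kmin u) kmin kmax v ≤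
      pathPayoff (edgeGame kmin u) kmin kmax (ownerAction kmin s) := by
  by_contra! hlt
  have hcard : (0 : ℝ) < (T1 kmin kmax).card := by
    rw [T1_eq_image_edge]
    exact_mod_cast (nonempty_Ico.2 hk).image _ |>.card_pos
  refine hpo ⟨(v, v), ?_⟩
  unfold EU
  rw [sum_T1_eq_pathPayoff, sum_T1_eq_pathPayoff, ownerAction_self]
  exact div_lt_div_of_pos_right hlt hcard

theorem edgeGame_canteenGame {kmax N : ℤ} {u : ℤ × ℤ → Act → Act → ℝ}
    (hu : SatisfiesU1U2 kmin kmax N u) {j : ℤ} (hj : j ∈ Ico kmin kmax) (hjN : j + 1 < N) :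
    CanteenGame (edgeGame kmin u j) := by
  rw [mem_Ico] at hj
  unfold edgeGame
  split_ifs
  · exact (hu _ (mem_T_iff.2 (by omega))).1 (by omega)
  · exact CanteenGame.swap ((hu (j + 1, j) (mem_T_iff.2 (by omega))).1 (by omega))

theorem edgeGame_officeGame {kmax N : ℤ} {u : ℤ × ℤ → Act → Act → ℝ}
    (hu : SatisfiesU1U2 kmin kmax N u) {j : ℤ} (hj : j ∈ Ico kmin kmax) (hjN : N ≤ j + 1) :
    OfficeGame (edgeGame kmin u j) := by
  rw [mem_Ico] at hj
  unfold edgeGame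
  split_ifs
  · exact (hu _ (mem_T_iff.2 (by omega))).2 (by omega)
  · exact OfficeGame.swap ((hu (j + 1, j) (mem_T_iff.2 (by omega))).2 (by omega))

theorem ownerAction_fst_of_mem_T1 {kmax : ℤ} {t : ℤ × ℤ} (ht : t ∈ T1 kmin kmax)
    (s : (ℤ → Act) × (ℤ → Act)) : ownerAction kmin s t.1 = s.1 t.1 := by
  rw [T1, mem_filter] at ht
  simp [ownerAction, ht.2]

theorem ownerAction_snd_of_mem_T1 {kmax : ℤ} {t : ℤ × ℤ} (ht : t ∈ T1 kmin kmax)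
    (s : (ℤ → Act) × (ℤ → Act)) : ownerAction kmin s t.2 = s.2 t.2 := by
  rw [T1, mem_filter, mem_T_iff] at ht
  simp [ownerAction, show ¬ t.2 % 2 = kmin % 2 by omega]

end T1Path

theorem stmt_2_general (kmin kmax N : ℤ) (h1 : kmin < N) (h3 : N < kmax)
    (u : ℤ × ℤ → Act → Act → ℝ) (hu : SatisfiesU1U2 kmin kmax N u)
    (s : (ℤ → Act) × (ℤ → Act))
    (hpo : ParetoOptimal u (T1 kmin kmax) s) :
    ∃ m : ℤ, kmin ≤ m ∧ m ≤ N ∧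
      ∀ t ∈ T1 kmin kmax,
        (s.1 t.1 = Act.c ↔ t.1 < m) ∧ (s.2 t.2 = Act.c ↔ t.2 < m) := by
  obtain ⟨m, hkm, hmN, hcut⟩ := exists_cutoff_of_optimal
    (fun _ hj hjN => edgeGame_canteenGame hu hj hjN)
    (fun _ hj hjN => edgeGame_officeGame hu hj hjN)
    (pathPayoff_le_of_paretoOptimal (h1.trans h3) hpo) h1.le h3
  refine ⟨m, hkm, hmN, fun t ht => ?_⟩
  obtain ⟨h₁, h₂, h₃, h₄, -⟩ := mem_T_iff.1 (mem_filter.1 ht).1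
  rw [← ownerAction_fst_of_mem_T1 ht, ← ownerAction_snd_of_mem_T1 ht]
  exact ⟨hcut _ (mem_Icc.2 ⟨h₁, h₂⟩), hcut _ (mem_Icc.2 ⟨h₃, h₄⟩)⟩

/-- Any profile Pareto optimal over the subgame `T1` has cut-off form
on `T1`, with cut-off at most `N`. -/
theorem stmt_2 (kmin kmax N : ℤ) (h1 : kmin < N) (h2 : N ≤ kmax) (h3 : N < kmax)
    (u : ℤ × ℤ → Act → Act → ℝ) (hu : SatisfiesU1U2 kmin kmax N u)
    (s : (ℤ → Act) × (ℤ → Act))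
    (hpo : ParetoOptimal u (T1 kmin kmax) s) :
    ∃ m : ℤ, kmin ≤ m ∧ m ≤ N ∧
      ∀ t ∈ T1 kmin kmax,
        (s.1 t.1 = Act.c ↔ t.1 < m) ∧ (s.2 t.2 = Act.c ↔ t.2 < m) :=
  stmt_2_general kmin kmax N h1 h3 u hu s hpo
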